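/- Let A be a symmetric matrix on ℝ^d whose positive eigenspace has dimension at most one. Then there exists a vector w such that ⟨x, Ax⟩ ≤ 0 for all x with ⟨x, Aw⟩ = 0. -/

import Mathlib

/-!
Expanding in an orthonormal eigenbasis, `⟨x, A x⟩ = ∑ μᵢ ⟨bᵢ, x⟩²`, so the quadratic form is
nonpositive on the orthogonal complement of the positive eigenspace `P`. If `P = 0` take `w = 0`.
Otherwise `P` is the line spanned by an eigenvector `v` with eigenvalue `μ > 0`, and we take
`w = v`: then `⟨x, A v⟩ = μ ⟨x, v⟩`, so `⟨x, A w⟩ = 0` says exactly that `x ⊥ P`.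
-/

open Matrix

/-- The positive eigenspace of a matrix: the span of all eigenspaces with
strictly positive eigenvalue. -/
noncomputable def posEigenspace {d : ℕ} (A : Matrix (Fin d) (Fin d) ℝ) :
    Submodule ℝ (Fin d → ℝ) :=
  ⨆ μ : ℝ, ⨆ _ : 0 < μ, Module.End.eigenspace A.mulVecLin μ

open RealInnerProductSpace in
theorem LinearMap.IsSymmetric.inner_map_self_nonpos_of_orthogonal_pos_eigenvectors
    {E : Type*} [NormedAddCommGroup E] [InnerProductSpace ℝ E] [FiniteDimensional ℝ E]
    {T : E →ₗ[ℝ] E} (hT : T.IsSymmetric) {x : E}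
    (hx : ∀ (μ : ℝ) (v : E), 0 < μ → T v = μ • v → ⟪v, x⟫ = 0) : ⟪T x, x⟫ ≤ 0 := by
  set b := hT.eigenvectorBasis rfl
  set μ := hT.eigenvalues rfl
  have hb (i) : T (b i) = μ i • b i := hT.apply_eigenvectorBasis rfl i
  rw [← b.sum_inner_mul_inner (T x) x]
  refine Finset.sum_nonpos fun i _ => ?_
  rw [hT x (b i), hb, real_inner_smul_right, real_inner_comm (b i) x]
  rcases le_or_gt (μ i) 0 with hμ | hμ
  · rw [mul_assoc]
    exact mul_nonpos_of_nonpos_of_nonneg hμ (mul_self_nonneg _)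
  · simp [hx _ _ hμ (hb i)]

section posEigenspace

variable {d : ℕ} {A : Matrix (Fin d) (Fin d) ℝ}

theorem mem_posEigenspace_of_mulVec_eq_smul {μ : ℝ} {v : Fin d → ℝ} (hμ : 0 < μ)
    (hv : A *ᵥ v = μ • v) : v ∈ posEigenspace A :=
  Submodule.mem_iSup_of_mem μ <| Submodule.mem_iSup_of_mem hμ <|
    Module.End.mem_eigenspace_iff.mpr hv

theorem exists_mulVec_eq_smul_of_posEigenspace_ne_bot (h : posEigenspace A ≠ ⊥) :
    ∃ μ : ℝ, 0 < μ ∧ ∃ v ≠ 0, A *ᵥ v = μ • v := by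
  simp only [posEigenspace, ne_eq, iSup_eq_bot, not_forall, Submodule.ne_bot_iff] at h
  obtain ⟨μ, hμ, v, hv, hv0⟩ := h
  exact ⟨μ, hμ, v, hv0, Module.End.mem_eigenspace_iff.mp hv⟩

theorem Matrix.IsSymm.dotProduct_mulVec_self_nonpos_of_orthogonal_posEigenspace
    (hA : A.IsSymm) {x : Fin d → ℝ} (hx : ∀ y ∈ posEigenspace A, x ⬝ᵥ y = 0) :
    x ⬝ᵥ A *ᵥ x ≤ 0 := by
  have hT : (toEuclideanLin A).IsSymmetric :=
    isSymmetric_toEuclideanLin_iff.mpr (isHermitian_iff_isSymm.mpr hA)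
  have := hT.inner_map_self_nonpos_of_orthogonal_pos_eigenvectors (x := WithLp.toLp 2 x)
    fun μ v hμ hv => by
      have hv' : A *ᵥ v.ofLp = μ • v.ofLp := by simpa using congrArg WithLp.ofLp hv
      simpa [EuclideanSpace.inner_eq_star_dotProduct, dotProduct_comm] using
        hx _ (mem_posEigenspace_of_mulVec_eq_smul hμ hv')
  simpa [EuclideanSpace.inner_toLp_toLp, dotProduct_comm] using this

end posEigenspace

theorem stmt3 {d : ℕ} (A : Matrix (Fin d) (Fin d) ℝ) (hA : A.IsSymm)
    (hdim : Module.finrank ℝ (posEigenspace A) ≤ 1) :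
    ∃ w : Fin d → ℝ, ∀ x : Fin d → ℝ, x ⬝ᵥ A.mulVec w = 0 → x ⬝ᵥ A.mulVec x ≤ 0 := by
  by_cases hP : posEigenspace A = ⊥
  · refine ⟨0, fun x _ => hA.dotProduct_mulVec_self_nonpos_of_orthogonal_posEigenspace
      fun y hy => ?_⟩
    rw [hP, Submodule.mem_bot] at hy
    simp [hy]
  obtain ⟨μ, hμ, v, hv0, hv⟩ := exists_mulVec_eq_smul_of_posEigenspace_ne_bot hP
  have hPv : posEigenspace A = ℝ ∙ v := eq_span_singleton_of_mem_of_finrank_eq_one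
    (hdim.antisymm (Submodule.one_le_finrank_iff.mpr hP))
    (mem_posEigenspace_of_mulVec_eq_smul hμ hv) hv0
  refine ⟨v, fun x hx => hA.dotProduct_mulVec_self_nonpos_of_orthogonal_posEigenspace
    fun y hy => ?_⟩
  rw [hv, dotProduct_smul, smul_eq_mul, mul_eq_zero] at hx
  obtain ⟨c, rfl⟩ := Submodule.mem_span_singleton.mp (hPv ▸ hy)
  simp [hx.resolve_left hμ.ne']
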